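/- Let p ≥ 1, B₁ < B₂ reals, B = [B₁,B₂]^p ⊆ ℝ^p, and let W : ℝ^p → ℝ be differentiable and σ-strongly concave on B with σ > 0, with sup_{β∈B} max_{1≤i≤p} |∂W/∂β_i(β)| ≤ G, and let β* ∈ B be a maximizer of W over B. Fix constants M ≥ η ≥ 1/σ and define iterates β₁ ∈ B and β_{w+1} = P(β_w + (η/(w+1)) ∇W(β_w)), where P is the coordinatewise projection onto B, and set L = max{2(B₂−B₁)², G² M²}. Assume additionally that there is a constant C̄ ≥ 0 with W(β*) − W(β) ≤ C̄ ‖β − β*‖² for all β ∈ B. Then for every integer T ≥ 1, the cumulative (in-sample) regret satisfies Σ_{w=1}^T (W(β*) − W(β_w)) ≤ C̄ · L · p · (1 + log T). -/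

import Mathlib

/-!
Strong concavity together with first-order optimality of `β*` on the box gives
`σ ‖β - β*‖² ≤ ⟪∇W β, β* - β⟫`. The box projection is `1`-Lipschitz and fixes `β*`, so with
`c_w = η / (w + 1)` and `d_w = ‖β_w - β*‖²` one step yields
`d_{w+1} ≤ (1 - 2σ c_w) d_w + c_w² p G²`. Since `ση ≥ 1` and `η ≤ M`, this recursion preserves
`d_w ≤ L p / w`, and the quadratic bound turns the regret into `C̄ L p` times a harmonic sum,
which is at most `1 + log T`.
-/

open Real

/-- The box `[B₁, B₂]^p` in `ℝ^p`. -/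
def box (p : ℕ) (B₁ B₂ : ℝ) : Set (EuclideanSpace ℝ (Fin p)) :=
  {x | ∀ i, x i ∈ Set.Icc B₁ B₂}

/-- Coordinatewise projection onto the box `[B₁, B₂]^p`: `(P x) i = min B₂ (max B₁ (x i))`. -/
noncomputable def boxProj (p : ℕ) (B₁ B₂ : ℝ) (x : EuclideanSpace ℝ (Fin p)) :
    EuclideanSpace ℝ (Fin p) :=
  (WithLp.equiv 2 (Fin p → ℝ)).symm fun i => min B₂ (max B₁ (x i))

/-- `W` is `σ`-strongly concave on `S`. -/
def PaperStrongConcaveOn {p : ℕ} (S : Set (EuclideanSpace ℝ (Fin p))) (σ : ℝ)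
    (W : EuclideanSpace ℝ (Fin p) → ℝ) : Prop :=
  ∀ x ∈ S, ∀ y ∈ S, ∀ t ∈ Set.Icc (0 : ℝ) 1,
    t * W x + (1 - t) * W y + σ / 2 * t * (1 - t) * ‖x - y‖ ^ 2 ≤ W (t • x + (1 - t) • y)

open Filter Topology
open scoped InnerProductSpace

lemma abs_clamp_sub_clamp_le (lo hi a b : ℝ) :
    |min hi (max lo a) - min hi (max lo b)| ≤ |a - b| :=
  calc |min hi (max lo a) - min hi (max lo b)| ≤ |max lo a - max lo b| := by
        simpa using abs_min_sub_min_le_max hi (max lo a) hi (max lo b)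
    _ ≤ |a - b| := by simpa using abs_max_sub_max_le_max lo a lo b

lemma EuclideanSpace.norm_sq_le_of_forall_abs_le {ι : Type*} [Fintype ι]
    (x : EuclideanSpace ℝ ι) {c : ℝ} (h : ∀ i, |x i| ≤ c) :
    ‖x‖ ^ 2 ≤ Fintype.card ι * c ^ 2 := by
  rw [EuclideanSpace.norm_sq_eq]
  calc ∑ i, ‖x i‖ ^ 2 ≤ ∑ _i : ι, c ^ 2 :=
        Finset.sum_le_sum fun i _ => pow_le_pow_left₀ (norm_nonneg _) (h i) 2
    _ = Fintype.card ι * c ^ 2 := by simp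

section StrongConcavity

variable {E : Type*} [NormedAddCommGroup E] [InnerProductSpace ℝ E] {s : Set E} {m : ℝ}
  {f : E → ℝ} {x y : E}

lemma StrongConcaveOn.sub_add_le_slope (hf : StrongConcaveOn s m f) (hx : x ∈ s) (hy : y ∈ s)
    {t : ℝ} (ht : t ∈ Set.Ioc 0 1) :
    f y - f x + (1 - t) * (m / 2 * ‖y - x‖ ^ 2) ≤ t⁻¹ * (f (x + t • (y - x)) - f x) := by
  have hconc := hf.2 hy hx ht.1.le (sub_nonneg.2 ht.2) (add_sub_cancel t 1)
  rw [show t • y + (1 - t) • x = x + t • (y - x) by module, smul_eq_mul, smul_eq_mul] at hconc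
  rw [le_inv_mul_iff₀ ht.1]
  linarith

variable [CompleteSpace E]

lemma StrongConcaveOn.sub_add_le_inner_gradient (hf : StrongConcaveOn s m f)
    (hfx : DifferentiableAt ℝ f x) (hx : x ∈ s) (hy : y ∈ s) :
    f y - f x + m / 2 * ‖y - x‖ ^ 2 ≤ ⟪gradient f x, y - x⟫_ℝ := by
  have hslope := (hfx.hasFDerivAt.hasLineDerivAt (y - x)).tendsto_slope_zero_right
  simp only [smul_eq_mul, ← inner_gradient_left] at hslope
  have hlim : Tendsto (fun t : ℝ => f y - f x + (1 - t) * (m / 2 * ‖y - x‖ ^ 2)) (𝓝[>] 0)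
      (𝓝 (f y - f x + m / 2 * ‖y - x‖ ^ 2)) :=
    tendsto_nhdsWithin_of_tendsto_nhds (Continuous.tendsto' (by fun_prop) 0 _ (by simp))
  refine le_of_tendsto_of_tendsto hlim hslope ?_
  filter_upwards [Ioc_mem_nhdsGT one_pos] with t ht using hf.sub_add_le_slope hx hy ht

lemma StrongConcaveOn.mul_sq_le_sub_of_isMaxOn (hf : StrongConcaveOn s m f)
    (hfx : DifferentiableAt ℝ f x) (hx : x ∈ s) (hmax : IsMaxOn f s x) (hy : y ∈ s) :
    m / 2 * ‖y - x‖ ^ 2 ≤ f x - f y := by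
  have hopt : ⟪gradient f x, y - x⟫_ℝ ≤ 0 := by
    rw [inner_gradient_left]
    exact hmax.localize.hasFDerivWithinAt_nonpos hfx.hasFDerivAt.hasFDerivWithinAt
      (sub_mem_posTangentConeAt_of_segment_subset (hf.1.segment_subset hx hy))
  linarith [hf.sub_add_le_inner_gradient hfx hx hy]

lemma StrongConcaveOn.mul_sq_le_inner_gradient_of_isMaxOn (hf : StrongConcaveOn s m f)
    (hfx : DifferentiableAt ℝ f x) (hfy : DifferentiableAt ℝ f y) (hx : x ∈ s)
    (hmax : IsMaxOn f s x) (hy : y ∈ s) :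
    m * ‖y - x‖ ^ 2 ≤ ⟪gradient f y, x - y⟫_ℝ := by
  have hgrad := hf.sub_add_le_inner_gradient hfy hy hx
  rw [norm_sub_rev] at hgrad
  linarith [hf.mul_sq_le_sub_of_isMaxOn hfx hx hmax hy]

end StrongConcavity

lemma norm_add_smul_sub_sq_le {E : Type*} [NormedAddCommGroup E] [InnerProductSpace ℝ E]
    {x y g : E} {σ c : ℝ} (hg : σ * ‖x - y‖ ^ 2 ≤ ⟪g, y - x⟫_ℝ) (hc : 0 ≤ c) :
    ‖x + c • g - y‖ ^ 2 ≤ (1 - 2 * σ * c) * ‖x - y‖ ^ 2 + c ^ 2 * ‖g‖ ^ 2 := by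
  have hexpand : ‖x + c • g - y‖ ^ 2 = ‖x - y‖ ^ 2 - 2 * c * ⟪g, y - x⟫_ℝ + c ^ 2 * ‖g‖ ^ 2 := by
    rw [show x + c • g - y = (x - y) + c • g by abel, norm_add_sq_real, real_inner_smul_right,
      norm_smul, Real.norm_eq_abs, mul_pow, sq_abs, real_inner_comm, ← neg_sub y x,
      inner_neg_right, norm_neg]
    ring
  rw [hexpand]
  nlinarith

lemma le_div_add_one_of_recursion {σ η M K Γ d w : ℝ} (hw : 1 ≤ w) (hση : 1 ≤ σ * η)
    (hη : 0 ≤ η) (hηM : η ≤ M) (hΓ : 0 ≤ Γ) (hK : M ^ 2 * Γ ≤ K) (hd : 0 ≤ d)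
    (hdK : d ≤ K / w) :
    (1 - 2 * σ * (η / (w + 1))) * d + (η / (w + 1)) ^ 2 * Γ ≤ K / (w + 1) := by
  have hw0 : 0 < w := by linarith
  have hK0 : 0 ≤ K := by linarith [mul_nonneg (sq_nonneg M) hΓ]
  have hcontract : 1 - 2 * σ * (η / (w + 1)) ≤ (w - 1) / (w + 1) := by
    rw [show (w - 1) / (w + 1) = 1 - 2 / (w + 1) by field_simp; ring,
      show 2 * σ * (η / (w + 1)) = 2 * (σ * η) / (w + 1) by ring]
    gcongr
    linarith
  have hnoise : (η / (w + 1)) ^ 2 * Γ ≤ K / (w + 1) ^ 2 := by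
    rw [div_pow, div_mul_eq_mul_div]
    gcongr
    exact (mul_le_mul_of_nonneg_right (pow_le_pow_left₀ hη hηM 2) hΓ).trans hK
  calc (1 - 2 * σ * (η / (w + 1))) * d + (η / (w + 1)) ^ 2 * Γ
      ≤ (w - 1) / (w + 1) * (K / w) + K / (w + 1) ^ 2 :=
        add_le_add (mul_le_mul hcontract hdK hd (div_nonneg (by linarith) (by linarith))) hnoise
    _ = K / (w + 1) - K / (w * (w + 1) ^ 2) := by field_simp; ring
    _ ≤ K / (w + 1) := sub_le_self _ (by positivity)

section Box

variable {p : ℕ} {B₁ B₂ : ℝ}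

lemma boxProj_apply (x : EuclideanSpace ℝ (Fin p)) (i : Fin p) :
    boxProj p B₁ B₂ x i = min B₂ (max B₁ (x i)) :=
  rfl

lemma convex_box : Convex ℝ (box p B₁ B₂) :=
  fun _ hx _ hy _ _ ha hb hab i => convex_Icc B₁ B₂ (hx i) (hy i) ha hb hab

lemma PaperStrongConcaveOn.strongConcaveOn {σ : ℝ} {W : EuclideanSpace ℝ (Fin p) → ℝ}
    (hW : PaperStrongConcaveOn (box p B₁ B₂) σ W) : StrongConcaveOn (box p B₁ B₂) σ W := by
  refine ⟨convex_box, fun x hx y hy a b ha hb hab => ?_⟩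
  obtain rfl : b = 1 - a := by linarith
  have := hW x hx y hy a ⟨ha, by linarith⟩
  simp only [smul_eq_mul]
  linarith

lemma boxProj_mem (hB : B₁ ≤ B₂) (x : EuclideanSpace ℝ (Fin p)) :
    boxProj p B₁ B₂ x ∈ box p B₁ B₂ :=
  fun _ => ⟨le_min hB (le_max_left _ _), min_le_left _ _⟩

lemma boxProj_eq_self {x : EuclideanSpace ℝ (Fin p)} (hx : x ∈ box p B₁ B₂) :
    boxProj p B₁ B₂ x = x := by
  ext i
  rw [boxProj_apply, max_eq_right (hx i).1, min_eq_right (hx i).2]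

lemma norm_boxProj_sub_boxProj_le (x y : EuclideanSpace ℝ (Fin p)) :
    ‖boxProj p B₁ B₂ x - boxProj p B₁ B₂ y‖ ≤ ‖x - y‖ := by
  rw [EuclideanSpace.norm_eq, EuclideanSpace.norm_eq]
  gcongr with i
  simp only [PiLp.sub_apply, boxProj_apply, Real.norm_eq_abs]
  exact abs_clamp_sub_clamp_le B₁ B₂ (x i) (y i)

lemma norm_boxProj_sub_le (x : EuclideanSpace ℝ (Fin p)) {y : EuclideanSpace ℝ (Fin p)}
    (hy : y ∈ box p B₁ B₂) : ‖boxProj p B₁ B₂ x - y‖ ≤ ‖x - y‖ := by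
  simpa only [boxProj_eq_self hy] using norm_boxProj_sub_boxProj_le (B₁ := B₁) (B₂ := B₂) x y

lemma norm_sub_sq_le_of_mem_box {x y : EuclideanSpace ℝ (Fin p)} (hx : x ∈ box p B₁ B₂)
    (hy : y ∈ box p B₁ B₂) : ‖x - y‖ ^ 2 ≤ p * (B₂ - B₁) ^ 2 := by
  simpa using EuclideanSpace.norm_sq_le_of_forall_abs_le (x - y)
    fun i => Real.dist_le_of_mem_Icc (hx i) (hy i)

lemma norm_boxProj_ascent_step_sub_sq_le {σ c : ℝ} {W : EuclideanSpace ℝ (Fin p) → ℝ}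
    (hW : StrongConcaveOn (box p B₁ B₂) σ W) (hdiff : Differentiable ℝ W)
    {βstar x : EuclideanSpace ℝ (Fin p)} (hβstar : βstar ∈ box p B₁ B₂)
    (hmax : IsMaxOn W (box p B₁ B₂) βstar) (hx : x ∈ box p B₁ B₂) (hc : 0 ≤ c) :
    ‖boxProj p B₁ B₂ (x + c • gradient W x) - βstar‖ ^ 2
      ≤ (1 - 2 * σ * c) * ‖x - βstar‖ ^ 2 + c ^ 2 * ‖gradient W x‖ ^ 2 :=
  calc ‖boxProj p B₁ B₂ (x + c • gradient W x) - βstar‖ ^ 2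
      ≤ ‖x + c • gradient W x - βstar‖ ^ 2 := by gcongr; exact norm_boxProj_sub_le _ hβstar
    _ ≤ (1 - 2 * σ * c) * ‖x - βstar‖ ^ 2 + c ^ 2 * ‖gradient W x‖ ^ 2 :=
      norm_add_smul_sub_sq_le
        (hW.mul_sq_le_inner_gradient_of_isMaxOn (hdiff _) (hdiff _) hβstar hmax hx) hc

end Box

lemma sum_Icc_le_mul_one_add_log {a : ℕ → ℝ} {C : ℝ} (hC : 0 ≤ C)
    (ha : ∀ w, 1 ≤ w → a w ≤ C / w) (T : ℕ) :
    ∑ w ∈ Finset.Icc 1 T, a w ≤ C * (1 + Real.log T) :=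
  calc ∑ w ∈ Finset.Icc 1 T, a w ≤ ∑ w ∈ Finset.Icc 1 T, C * (w : ℝ)⁻¹ :=
        Finset.sum_le_sum fun w hw => (ha w (Finset.mem_Icc.1 hw).1).trans_eq (div_eq_mul_inv _ _)
    _ = C * harmonic T := by
        rw [← Finset.mul_sum, harmonic_eq_sum_Icc]; push_cast; rfl
    _ ≤ C * (1 + Real.log T) := by gcongr; exact harmonic_le_one_add_log T

theorem stmt4_general (p : ℕ) (B₁ B₂ : ℝ) (hB : B₁ < B₂)
    (σ G M η Cbar : ℝ) (hσ : 0 < σ) (hησ : 1 / σ ≤ η) (hηM : η ≤ M) (hCbar : 0 ≤ Cbar)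
    (W : EuclideanSpace ℝ (Fin p) → ℝ)
    (hdiff : Differentiable ℝ W)
    (hconc : PaperStrongConcaveOn (box p B₁ B₂) σ W)
    (hG : ∀ x ∈ box p B₁ B₂, ∀ i, |gradient W x i| ≤ G)
    (βstar : EuclideanSpace ℝ (Fin p)) (hβstar : βstar ∈ box p B₁ B₂)
    (hmax : ∀ b ∈ box p B₁ B₂, W b ≤ W βstar)
    (hquad : ∀ b ∈ box p B₁ B₂, W βstar - W b ≤ Cbar * ‖b - βstar‖ ^ 2)
    (β : ℕ → EuclideanSpace ℝ (Fin p)) (hβ1 : β 1 ∈ box p B₁ B₂)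
    (hrec : ∀ w : ℕ, 1 ≤ w →
      β (w + 1) = boxProj p B₁ B₂ (β w + (η / ((w : ℝ) + 1)) • gradient W (β w))) :
    ∀ T : ℕ, 1 ≤ T →
      ∑ w ∈ Finset.Icc 1 T, (W βstar - W (β w))
        ≤ Cbar * max (2 * (B₂ - B₁) ^ 2) (G ^ 2 * M ^ 2) * p * (1 + Real.log T) := by
  set L := max (2 * (B₂ - B₁) ^ 2) (G ^ 2 * M ^ 2)
  have hη : 0 ≤ η := (one_div_pos.2 hσ).le.trans hησ
  have hση : 1 ≤ σ * η := by rwa [div_le_iff₀' hσ] at hησ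
  have hmem : ∀ w, 1 ≤ w → β w ∈ box p B₁ B₂ :=
    Nat.le_induction hβ1 fun w hw _ => hrec w hw ▸ boxProj_mem hB.le _
  have hdist : ∀ w, 1 ≤ w → ‖β w - βstar‖ ^ 2 ≤ L * p / w := by
    refine Nat.le_induction ?_ fun w hw ih => ?_
    · rw [Nat.cast_one, div_one, mul_comm L]
      refine (norm_sub_sq_le_of_mem_box hβ1 hβstar).trans ?_
      gcongr
      exact (le_mul_of_one_le_left (sq_nonneg _) one_le_two).trans (le_max_left _ _)
    · have hgrad : ‖gradient W (β w)‖ ^ 2 ≤ p * G ^ 2 := by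
        simpa using EuclideanSpace.norm_sq_le_of_forall_abs_le _ (hG _ (hmem w hw))
      have hnoise : M ^ 2 * (p * G ^ 2) ≤ L * p := by
        rw [show M ^ 2 * (p * G ^ 2) = G ^ 2 * M ^ 2 * p by ring]
        gcongr
        exact le_max_right _ _
      rw [hrec w hw, Nat.cast_succ]
      refine (norm_boxProj_ascent_step_sub_sq_le hconc.strongConcaveOn hdiff hβstar
        (isMaxOn_iff.2 hmax) (hmem w hw) (by positivity)).trans ?_
      grw [hgrad]
      exact le_div_add_one_of_recursion (by exact_mod_cast hw) hση hη hηM (by positivity)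
        hnoise (sq_nonneg _) ih
  intro T _
  refine sum_Icc_le_mul_one_add_log (by positivity) (fun w hw => ?_) T
  calc W βstar - W (β w) ≤ Cbar * ‖β w - βstar‖ ^ 2 := hquad _ (hmem w hw)
    _ ≤ Cbar * (L * p / w) := by gcongr; exact hdist w hw
    _ = Cbar * L * p / w := by ring

/-- **In-sample (cumulative) regret of projected gradient ascent (Theorem 4.3).**
Under the setup of the projected gradient ascent iterates with learning rate `η/(w+1)`,
`M ≥ η ≥ 1/σ`, and with the quadratic upper bound `W(β*) - W(β) ≤ C̄ ‖β - β*‖²` on the box,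
the cumulative regret over `T` iterations is at most `C̄ L p (1 + log T)`,
where `L = max (2(B₂-B₁)²) (G²M²)`. -/
theorem stmt4 (p : ℕ) (hp : 1 ≤ p) (B₁ B₂ : ℝ) (hB : B₁ < B₂)
    (σ G M η Cbar : ℝ) (hσ : 0 < σ) (hησ : 1 / σ ≤ η) (hηM : η ≤ M) (hCbar : 0 ≤ Cbar)
    (W : EuclideanSpace ℝ (Fin p) → ℝ)
    (hdiff : Differentiable ℝ W)
    (hconc : PaperStrongConcaveOn (box p B₁ B₂) σ W)
    (hG : ∀ x ∈ box p B₁ B₂, ∀ i, |gradient W x i| ≤ G)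
    (βstar : EuclideanSpace ℝ (Fin p)) (hβstar : βstar ∈ box p B₁ B₂)
    (hmax : ∀ b ∈ box p B₁ B₂, W b ≤ W βstar)
    (hquad : ∀ b ∈ box p B₁ B₂, W βstar - W b ≤ Cbar * ‖b - βstar‖ ^ 2)
    (β : ℕ → EuclideanSpace ℝ (Fin p)) (hβ1 : β 1 ∈ box p B₁ B₂)
    (hrec : ∀ w : ℕ, 1 ≤ w →
      β (w + 1) = boxProj p B₁ B₂ (β w + (η / ((w : ℝ) + 1)) • gradient W (β w))) :
    ∀ T : ℕ, 1 ≤ T →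
      ∑ w ∈ Finset.Icc 1 T, (W βstar - W (β w))
        ≤ Cbar * max (2 * (B₂ - B₁) ^ 2) (G ^ 2 * M ^ 2) * p * (1 + Real.log T) :=
  stmt4_general p B₁ B₂ hB σ G M η Cbar hσ hησ hηM hCbar W hdiff hconc hG βstar hβstar hmax hquad β
    hβ1 hrec
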